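/- Let (f,g) ∈ C_4(I) and let μ be a Borel probability measure on [0,1]. Then for every fixed x ∈ I, the function m_x := m_{x;f,g;μ} is four times continuously differentiable in a neighborhood of 0 and its fourth derivative at 0 satisfies m_x''''(0) = −3μ₂²·(Φ³_{f,g} + 2Φ_{f,g}Ψ_{f,g})(x) + μ₄·(Φ''_{f,g} + 3Φ'_{f,g}Φ_{f,g} + Φ³_{f,g} + 2Φ_{f,g}Ψ_{f,g} + 2Ψ'_{f,g})(x). -/

import Mathlib

open MeasureTheory Set

/-- The generalized quasiarithmetic mean `M_{f,g;μ}` on the interval `I`. -/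
noncomputable def Mmean (I : Set ℝ) (f g : ℝ → ℝ) (μ : Measure ℝ) (x y : ℝ) : ℝ :=
  Function.invFunOn (fun t => f t / g t) I
    ((∫ t in Set.Icc (0:ℝ) 1, f (t * x + (1 - t) * y) ∂μ) /
      (∫ t in Set.Icc (0:ℝ) 1, g (t * x + (1 - t) * y) ∂μ))

/-- First moment `μ̂₁` of a measure on `[0,1]`. -/
noncomputable def mom1 (μ : Measure ℝ) : ℝ := ∫ t in Set.Icc (0:ℝ) 1, t ∂μ

/-- `n`-th centralized moment `μ_n` of a measure on `[0,1]`. -/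
noncomputable def cmom (μ : Measure ℝ) (n : ℕ) : ℝ :=
  ∫ t in Set.Icc (0:ℝ) 1, (t - mom1 μ) ^ n ∂μ

/-- The auxiliary function `m_{x;f,g;μ}`. -/
noncomputable def mfun (I : Set ℝ) (f g : ℝ → ℝ) (μ : Measure ℝ) (x : ℝ) : ℝ → ℝ :=
  fun u => Mmean I f g μ (x + (1 - mom1 μ) * u) (x - mom1 μ * u)

/-- The `(i,j)`-order Wronskian `W^{i,j}_{f,g} = f⁽ⁱ⁾g⁽ʲ⁾ − f⁽ʲ⁾g⁽ⁱ⁾`. -/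
noncomputable def Wr (i j : ℕ) (f g : ℝ → ℝ) : ℝ → ℝ :=
  fun x => iteratedDeriv i f x * iteratedDeriv j g x - iteratedDeriv j f x * iteratedDeriv i g x

/-- `Φ_{f,g} = W^{2,0}/W^{1,0}`. -/
noncomputable def Phi (f g : ℝ → ℝ) : ℝ → ℝ := fun x => Wr 2 0 f g x / Wr 1 0 f g x

/-- `Ψ_{f,g} = −W^{2,1}/W^{1,0}`. -/
noncomputable def Psi (f g : ℝ → ℝ) : ℝ → ℝ := fun x => -(Wr 2 1 f g x / Wr 1 0 f g x)

/-- The class `𝒞_n(I)` for `n ≥ 1`. -/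
def ClassC (n : ℕ) (I : Set ℝ) (f g : ℝ → ℝ) : Prop :=
  ContDiffOn ℝ n f I ∧ ContDiffOn ℝ n g I ∧ (∀ x ∈ I, 0 < g x) ∧
    ∀ x ∈ I, Wr 1 0 f g x ≠ 0

/-- The class `𝒞₀(I)`. -/
def ClassC0 (I : Set ℝ) (f g : ℝ → ℝ) : Prop :=
  ContinuousOn f I ∧ ContinuousOn g I ∧ (∀ x ∈ I, 0 < g x) ∧
    (StrictMonoOn (fun x => f x / g x) I ∨ StrictAntiOn (fun x => f x / g x) I)

/-- Equivalence of pairs: `(f,g) ∼ (F,G)`. -/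
def EquivPair (I : Set ℝ) (f g F G : ℝ → ℝ) : Prop :=
  ∃ a b c d : ℝ, a * d ≠ b * c ∧
    ∀ x ∈ I, F x = a * f x + b * g x ∧ G x = c * f x + d * g x

/-- Equality of two two-variable means near the diagonal of `I²`. -/
def EqualNearDiag (I : Set ℝ) (M N : ℝ → ℝ → ℝ) : Prop :=
  ∃ U : Set (ℝ × ℝ), IsOpen U ∧ U ⊆ I ×ˢ I ∧
    I ⊆ closure {y | y ∈ I ∧ (y, y) ∈ U} ∧
    ∀ p ∈ U, M p.1 p.2 = N p.1 p.2

/-- The quasiarithmetic mean `A_φ`. -/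
noncomputable def QAmean (I : Set ℝ) (φ : ℝ → ℝ) (x y : ℝ) : ℝ :=
  Function.invFunOn φ I ((φ x + φ y) / 2)

/-- The sine-type function `S_t`. -/
noncomputable def Sfun (t x : ℝ) : ℝ :=
  if t < 0 then Real.sin (Real.sqrt (-t) * x)
  else if t = 0 then x
  else Real.sinh (Real.sqrt t * x)

/-- The cosine-type function `C_t`. -/
noncomputable def Cfun (t x : ℝ) : ℝ :=
  if t < 0 then Real.cos (Real.sqrt (-t) * x)
  else if t = 0 then 1
  else Real.cosh (Real.sqrt t * x)

/-- The real (sign-preserving) cube root. -/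
noncomputable def cbrt (x : ℝ) : ℝ :=
  if x < 0 then -((-x) ^ ((1:ℝ)/3)) else x ^ ((1:ℝ)/3)

/-!
Put `c = μ̂₁`, `P u = ∫ f (x + (t - c) u) dμ(t)` and `Q u = ∫ g (x + (t - c) u) dμ(t)`, so that
`m_x = (f/g)⁻¹ ∘ (P/Q)`, which is `C⁴` by the inverse function theorem. Differentiating under the
integral, `P⁽ᵏ⁾(0) = μ_k f⁽ᵏ⁾(x)` and `Q⁽ᵏ⁾(0) = μ_k g⁽ᵏ⁾(x)`, where `μ₀ = 1` and `μ₁ = 0`.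
Differentiating `f(m_x) Q = g(m_x) P` with Leibniz' and Faà di Bruno's formulas gives `m_x'(0) = 0`,
then `W¹⁰ m_x''(0) = μ₂ W²⁰` and `W¹⁰ m_x''''(0) = μ₄ W⁴⁰ + 6 μ₂ m_x''(0) W²¹ - 3 m_x''(0)² W²⁰`.
Finally, the quotients `W^{ij}/W¹⁰` differentiate to `(W^{i+1,j} + W^{i,j+1})/W¹⁰ - Φ W^{ij}/W¹⁰`,
which turns `W⁴⁰/W¹⁰` into `Φ'' + 3Φ'Φ + Φ³ + 2ΦΨ + 2Ψ'`.
-/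

open Filter Topology Metric

section IteratedDeriv

variable {𝕜 : Type*} [NontriviallyNormedField 𝕜] {f g : 𝕜 → 𝕜} {x : 𝕜}

theorem ContDiffAt.contDiffAt_iteratedDeriv {m k : ℕ} (hf : ContDiffAt 𝕜 (m + k) f x) :
    ContDiffAt 𝕜 m (iteratedDeriv k f) x := by
  induction k generalizing f with
  | zero => simpa using hf
  | succ k ih =>
    rw [iteratedDeriv_succ']
    exact ih (hf.derivWithin (by push_cast; rw [add_assoc]))

theorem ContDiffAt.hasDerivAt_iteratedDeriv {n k : ℕ} (hf : ContDiffAt 𝕜 n f x) (hk : k < n) :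
    HasDerivAt (iteratedDeriv k f) (iteratedDeriv (k + 1) f x) x := by
  have hf' : ContDiffAt 𝕜 ((1 + k : ℕ) : WithTop ℕ∞) f x := hf.of_le (by norm_cast; omega)
  rw [iteratedDeriv_succ]
  exact (hf'.contDiffAt_iteratedDeriv.differentiableAt one_ne_zero).hasDerivAt

theorem iteratedDeriv_comp_four (hg : ContDiffAt 𝕜 4 g (f x)) (hf : ContDiffAt 𝕜 4 f x) :
    iteratedDeriv 4 (g ∘ f) x =
      iteratedDeriv 4 g (f x) * deriv f x ^ 4 +
      6 * iteratedDeriv 3 g (f x) * iteratedDeriv 2 f x * deriv f x ^ 2 +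
      3 * iteratedDeriv 2 g (f x) * iteratedDeriv 2 f x ^ 2 +
      4 * iteratedDeriv 2 g (f x) * iteratedDeriv 3 f x * deriv f x +
      deriv g (f x) * iteratedDeriv 4 f x := by
  have hg' : ContDiffAt 𝕜 3 (deriv g) (f x) := hg.derivWithin (by norm_num)
  have hf' : ContDiffAt 𝕜 3 (deriv f) x := hf.derivWithin (by norm_num)
  have hderiv : deriv (g ∘ f) =ᶠ[𝓝 x] (deriv g ∘ f) * deriv f := by
    filter_upwards [hf.eventually (by simp), hf.continuousAt.eventually (hg.eventually (by simp))]
      with y hfy hgy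
    exact deriv_comp y (hgy.differentiableAt (by simp)) (hfy.differentiableAt (by simp))
  rw [iteratedDeriv_succ', hderiv.iteratedDeriv_eq,
    iteratedDeriv_mul (hg'.comp x (hf.of_le (by norm_num))) hf']
  simp only [Finset.sum_range_succ, Finset.sum_range_zero, iteratedDeriv_zero, Function.comp_apply,
    iteratedDeriv_one, iteratedDeriv_comp_two (hg'.of_le (by norm_num)) (hf.of_le (by norm_num)),
    iteratedDeriv_comp_three hg' (hf.of_le (by norm_num))]
  have hsucc (k : ℕ) (φ : 𝕜 → 𝕜) : iteratedDeriv k (deriv φ) = iteratedDeriv (k + 1) φ :=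
    iteratedDeriv_succ'.symm
  have htwo (φ : 𝕜 → 𝕜) : deriv (deriv φ) = iteratedDeriv 2 φ := by
    rw [← hsucc, iteratedDeriv_one]
  rw [deriv_comp x (hg'.differentiableAt (by norm_num)) (hf.differentiableAt (by norm_num))]
  simp only [hsucc, htwo]
  norm_num
  ring

theorem iteratedDeriv_comp_two_of_deriv_eq_zero (hg : ContDiffAt 𝕜 2 g (f x))
    (hf : ContDiffAt 𝕜 2 f x) (hf1 : deriv f x = 0) :
    iteratedDeriv 2 (g ∘ f) x = deriv g (f x) * iteratedDeriv 2 f x := by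
  rw [iteratedDeriv_comp_two hg hf, hf1]
  ring

theorem iteratedDeriv_comp_four_of_deriv_eq_zero (hg : ContDiffAt 𝕜 4 g (f x))
    (hf : ContDiffAt 𝕜 4 f x) (hf1 : deriv f x = 0) :
    iteratedDeriv 4 (g ∘ f) x = deriv g (f x) * iteratedDeriv 4 f x
      + 3 * iteratedDeriv 2 g (f x) * iteratedDeriv 2 f x ^ 2 := by
  rw [iteratedDeriv_comp_four hg hf, hf1]
  ring

end IteratedDeriv

section DerivSequence

variable {𝕜 E : Type*} [NontriviallyNormedField 𝕜] [NormedAddCommGroup E] [NormedSpace 𝕜 E]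
  {P : ℕ → 𝕜 → E} {U : Set 𝕜} {n : ℕ}

theorem eqOn_iteratedDeriv_of_hasDerivAt_succ (hU : IsOpen U)
    (hP : ∀ j < n, ∀ u ∈ U, HasDerivAt (P j) (P (j + 1) u) u) :
    ∀ k ≤ n, Set.EqOn (iteratedDeriv k (P 0)) (P k) U := by
  intro k hk
  induction k with
  | zero => simp [Set.EqOn]
  | succ k ih =>
    intro u hu
    rw [iteratedDeriv_succ, ((ih (by omega)).eventuallyEq_of_mem (hU.mem_nhds hu)).deriv_eq]
    exact (hP k (by omega) u hu).deriv

theorem contDiffOn_of_hasDerivAt_succ (hU : IsOpen U)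
    (hP : ∀ j < n, ∀ u ∈ U, HasDerivAt (P j) (P (j + 1) u) u) (hPn : ContinuousOn (P n) U) :
    ContDiffOn 𝕜 n (P 0) U := by
  induction n generalizing P with
  | zero => simpa using hPn
  | succ n ih =>
    rw [Nat.cast_succ, contDiffOn_succ_iff_deriv_of_isOpen hU]
    refine ⟨fun u hu => (hP 0 (by omega) u hu).differentiableAt.differentiableWithinAt,
      by simp, ?_⟩
    have hP' : ContDiffOn 𝕜 n (P 1) U :=
      ih (P := fun j => P (j + 1)) (fun j hj u hu => hP (j + 1) (by omega) u hu) hPn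
    exact hP'.congr fun u hu => (hP 0 (by omega) u hu).deriv

end DerivSequence

section Inverse

variable {h : ℝ → ℝ} {I : Set ℝ} {x : ℝ}

theorem injOn_of_hasDerivAt_ne_zero {h' : ℝ → ℝ} (hI : IsOpen I) (hIc : I.OrdConnected)
    (hd : ∀ y ∈ I, HasDerivAt h (h' y) y) (hne : ∀ y ∈ I, h' y ≠ 0) : InjOn h I := by
  have hcont : ContinuousOn h I := fun y hy => (hd y hy).continuousAt.continuousWithinAt
  have hd' : ∀ y ∈ interior I, HasDerivWithinAt h (h' y) (interior I) y := by
    rw [hI.interior_eq]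
    exact fun y hy => (hd y hy).hasDerivWithinAt
  rcases hasDerivWithinAt_forall_lt_or_forall_gt_of_forall_ne hIc.convex
    (fun y hy => (hd y hy).hasDerivWithinAt) hne with hneg | hpos
  · exact (strictAntiOn_of_hasDerivWithinAt_neg hIc.convex hcont hd'
      fun y hy => hneg y (interior_subset hy)).injOn
  · exact (strictMonoOn_of_hasDerivWithinAt_pos hIc.convex hcont hd'
      fun y hy => hpos y (interior_subset hy)).injOn

theorem eventually_apply_invFunOn {h' : ℝ} (hI : I ∈ 𝓝 x) (hh : HasStrictDerivAt h h' x)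
    (hh' : h' ≠ 0) : ∀ᶠ y in 𝓝 (h x), h (Function.invFunOn h I y) = y := by
  have : h '' I ∈ 𝓝 (h x) := hh.map_nhds_eq hh' ▸ image_mem_map hI
  filter_upwards [this] with y ⟨a, ha, hay⟩ using Function.invFunOn_eq ⟨a, ha, hay⟩

theorem contDiffAt_invFunOn {n : WithTop ℕ∞} (hI : I ∈ 𝓝 x) (hinj : InjOn h I)
    (hh : ContDiffAt ℝ n h x) (hh' : deriv h x ≠ 0) (hn : n ≠ 0) :
    ContDiffAt ℝ n (Function.invFunOn h I) (h x) := by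
  have hstrict := (hh.hasStrictDerivAt hn).hasStrictFDerivAt_equiv hh'
  set ψ := hh.localInverse hstrict.hasFDerivAt hn
  have hψ : ContDiffAt ℝ n ψ (h x) := hh.to_localInverse hstrict.hasFDerivAt hn
  have hψx : ψ (h x) = x := hh.localInverse_apply_image hstrict.hasFDerivAt hn
  refine hψ.congr_of_eventuallyEq ?_
  filter_upwards [hstrict.eventually_right_inverse,
    hψ.continuousAt.preimage_mem_nhds (hψx ▸ hI)] with y hy hψy
  exact hinj (Function.invFunOn_mem ⟨ψ y, hψy, hy⟩) hψy
    ((Function.invFunOn_eq ⟨ψ y, hψy, hy⟩).trans hy.symm)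

end Inverse

section SegmentIntegral

variable {μ : Measure ℝ} {φ φ' : ℝ → ℝ} {c x δ u₀ : ℝ}

theorem add_sub_mul_mem_ball {t u : ℝ} (ht : t ∈ Icc (0:ℝ) 1) (hc : c ∈ Icc (0:ℝ) 1)
    (hu : |u| < δ) : x + (t - c) * u ∈ ball x δ := by
  have htc : |t - c| ≤ 1 := abs_le.2 ⟨by linarith [ht.1, hc.2], by linarith [ht.2, hc.1]⟩
  rw [mem_ball, Real.dist_eq, add_sub_cancel_left, abs_mul]
  calc |t - c| * |u| ≤ 1 * |u| := by gcongr
    _ < δ := by rwa [one_mul]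

theorem norm_pow_mul_le {t u C : ℝ} (j : ℕ) (hC : ∀ y ∈ ball x δ, ‖φ y‖ ≤ C)
    (ht : t ∈ Icc (0:ℝ) 1) (hc : c ∈ Icc (0:ℝ) 1) (hu : |u| < δ) :
    ‖(t - c) ^ j * φ (x + (t - c) * u)‖ ≤ C := by
  have htc : |t - c| ≤ 1 := abs_le.2 ⟨by linarith [ht.1, hc.2], by linarith [ht.2, hc.1]⟩
  rw [norm_mul, norm_pow, Real.norm_eq_abs]
  calc |t - c| ^ j * ‖φ (x + (t - c) * u)‖ ≤ 1 ^ j * C := by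
        gcongr
        exact hC _ (add_sub_mul_mem_ball ht hc hu)
    _ = C := by rw [one_pow, one_mul]

theorem continuousOn_pow_mul_comp (j : ℕ) (hφ : ContinuousOn φ (ball x δ))
    (hc : c ∈ Icc (0:ℝ) 1) {u : ℝ} (hu : |u| < δ) :
    ContinuousOn (fun t => (t - c) ^ j * φ (x + (t - c) * u)) (Icc 0 1) :=
  (continuousOn_id.sub continuousOn_const).pow j |>.mul
    (hφ.comp (by fun_prop) fun _ ht => add_sub_mul_mem_ball ht hc hu)

theorem aestronglyMeasurable_pow_mul_comp (j : ℕ) (hφ : ContinuousOn φ (ball x δ))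
    (hc : c ∈ Icc (0:ℝ) 1) {u : ℝ} (hu : |u| < δ) :
    AEStronglyMeasurable (fun t => (t - c) ^ j * φ (x + (t - c) * u)) (μ.restrict (Icc 0 1)) :=
  (continuousOn_pow_mul_comp j hφ hc hu).aestronglyMeasurable measurableSet_Icc

theorem continuousAt_integral_pow_mul_comp [IsFiniteMeasure μ] (j : ℕ)
    (hφ : ContinuousOn φ (closedBall x δ)) (hc : c ∈ Icc (0:ℝ) 1) (hu₀ : |u₀| < δ) :
    ContinuousAt (fun u => ∫ t in Icc (0:ℝ) 1, (t - c) ^ j * φ (x + (t - c) * u) ∂μ) u₀ := by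
  obtain ⟨C, hC⟩ := (isCompact_closedBall x δ).exists_bound_of_continuousOn hφ
  have hev : ∀ᶠ u in 𝓝 u₀, |u| < δ :=
    continuous_abs.continuousAt.eventually_lt continuousAt_const hu₀
  apply continuousAt_of_dominated (bound := fun _ => C)
  · filter_upwards [hev] with u hu using
      aestronglyMeasurable_pow_mul_comp j (hφ.mono ball_subset_closedBall) hc hu
  · filter_upwards [hev] with u hu
    filter_upwards [ae_restrict_mem measurableSet_Icc] with t ht using
      norm_pow_mul_le j (fun y hy => hC y (ball_subset_closedBall hy)) ht hc hu
  · exact integrable_const C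
  · filter_upwards [ae_restrict_mem measurableSet_Icc] with t ht
    refine continuousAt_const.mul ((hφ.continuousAt ?_).comp (by fun_prop))
    exact closedBall_mem_nhds_of_mem (add_sub_mul_mem_ball ht hc hu₀)

theorem hasDerivAt_integral_pow_mul_comp [IsFiniteMeasure μ] (j : ℕ)
    (hφ : ∀ y ∈ ball x δ, HasDerivAt φ (φ' y) y) (hφ' : ContinuousOn φ' (closedBall x δ))
    (hc : c ∈ Icc (0:ℝ) 1) (hu₀ : |u₀| < δ) :
    HasDerivAt (fun u => ∫ t in Icc (0:ℝ) 1, (t - c) ^ j * φ (x + (t - c) * u) ∂μ)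
      (∫ t in Icc (0:ℝ) 1, (t - c) ^ (j + 1) * φ' (x + (t - c) * u₀) ∂μ) u₀ := by
  obtain ⟨C, hC⟩ := (isCompact_closedBall x δ).exists_bound_of_continuousOn hφ'
  have hφc : ContinuousOn φ (ball x δ) := fun y hy => (hφ y hy).continuousAt.continuousWithinAt
  have hball : ∀ u ∈ ball u₀ (δ - |u₀|), |u| < δ := fun u hu => by
    rw [mem_ball, Real.dist_eq] at hu
    linarith [abs_sub_abs_le_abs_sub u u₀]
  have hev : ∀ᶠ u in 𝓝 u₀, |u| < δ :=
    Filter.mem_of_superset (ball_mem_nhds u₀ (sub_pos.2 hu₀)) hball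
  refine (hasDerivAt_integral_of_dominated_loc_of_deriv_le (bound := fun _ => C)
    (F := fun u t => (t - c) ^ j * φ (x + (t - c) * u))
    (F' := fun u t => (t - c) ^ (j + 1) * φ' (x + (t - c) * u))
    (ball_mem_nhds u₀ (sub_pos.2 hu₀)) ?_ ?_ ?_ ?_ (integrable_const C) ?_).2
  · filter_upwards [hev] with u hu using aestronglyMeasurable_pow_mul_comp j hφc hc hu
  · exact (continuousOn_pow_mul_comp j hφc hc hu₀).integrableOn_compact isCompact_Icc
  · exact aestronglyMeasurable_pow_mul_comp (j + 1) (hφ'.mono ball_subset_closedBall) hc hu₀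
  · filter_upwards [ae_restrict_mem measurableSet_Icc] with t ht u hu using
      norm_pow_mul_le (j + 1) (fun y hy => hC y (ball_subset_closedBall hy)) ht hc (hball u hu)
  · filter_upwards [ae_restrict_mem measurableSet_Icc] with t ht u hu
    have := ((hφ _ (add_sub_mul_mem_ball ht hc (hball u hu))).comp u
      (((hasDerivAt_id' u).const_mul (t - c)).const_add x)).const_mul ((t - c) ^ j)
    exact this.congr_deriv (by ring)

end SegmentIntegral

section DerivMean

variable {μ : Measure ℝ} {F : ℝ → ℝ} {c x δ : ℝ} {n : ℕ}

/-- The `j`-th derivative in `u` of `∫ t in [0,1], F (x + (t - c) * u) ∂μ`. -/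
noncomputable def derivMean (μ : Measure ℝ) (c : ℝ) (F : ℝ → ℝ) (x : ℝ) (j : ℕ) (u : ℝ) : ℝ :=
  ∫ t in Icc (0:ℝ) 1, (t - c) ^ j * iteratedDeriv j F (x + (t - c) * u) ∂μ

theorem derivMean_apply_zero (j : ℕ) :
    derivMean μ c F x j 0 = (∫ t in Icc (0:ℝ) 1, (t - c) ^ j ∂μ) * iteratedDeriv j F x := by
  simp [derivMean, ← integral_mul_const]

theorem continuousOn_iteratedDeriv_of_contDiffAt {s : Set ℝ} {k : ℕ}
    (hF : ∀ y ∈ s, ContDiffAt ℝ n F y) (hk : k ≤ n) : ContinuousOn (iteratedDeriv k F) s :=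
  fun y hy => by
    have hF' : ContDiffAt ℝ ((n - k : ℕ) + k : ℕ) F y := by
      rw [Nat.sub_add_cancel hk]
      exact hF y hy
    exact hF'.contDiffAt_iteratedDeriv.continuousAt.continuousWithinAt

variable [IsFiniteMeasure μ]

theorem hasDerivAt_derivMean (hF : ∀ y ∈ closedBall x δ, ContDiffAt ℝ n F y)
    (hc : c ∈ Icc (0:ℝ) 1) {j : ℕ} (hj : j < n) :
    ∀ u ∈ ball (0:ℝ) δ, HasDerivAt (derivMean μ c F x j) (derivMean μ c F x (j + 1) u) u := by
  intro u hu
  rw [mem_ball_zero_iff, Real.norm_eq_abs] at hu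
  exact hasDerivAt_integral_pow_mul_comp j
    (fun y hy => (hF y (ball_subset_closedBall hy)).hasDerivAt_iteratedDeriv hj)
    (continuousOn_iteratedDeriv_of_contDiffAt hF hj) hc hu

theorem contDiffAt_derivMean (hF : ContDiffAt ℝ n F x) (hc : c ∈ Icc (0:ℝ) 1) :
    ContDiffAt ℝ n (derivMean μ c F x 0) 0 := by
  obtain ⟨δ, hδ, hFδ⟩ := nhds_basis_closedBall.mem_iff.1 (hF.eventually (by simp))
  refine (contDiffOn_of_hasDerivAt_succ (P := derivMean μ c F x) isOpen_ball
    (fun j hj => hasDerivAt_derivMean hFδ hc hj) fun u hu => ?_).contDiffAt (ball_mem_nhds 0 hδ)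
  rw [mem_ball_zero_iff, Real.norm_eq_abs] at hu
  exact (continuousAt_integral_pow_mul_comp n (continuousOn_iteratedDeriv_of_contDiffAt hFδ le_rfl)
    hc hu).continuousWithinAt

theorem iteratedDeriv_derivMean (hF : ContDiffAt ℝ n F x) (hc : c ∈ Icc (0:ℝ) 1) {k : ℕ}
    (hk : k ≤ n) : iteratedDeriv k (derivMean μ c F x 0) 0
      = (∫ t in Icc (0:ℝ) 1, (t - c) ^ k ∂μ) * iteratedDeriv k F x := by
  obtain ⟨δ, hδ, hFδ⟩ := nhds_basis_closedBall.mem_iff.1 (hF.eventually (by simp))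
  rw [eqOn_iteratedDeriv_of_hasDerivAt_succ (P := derivMean μ c F x) isOpen_ball
    (fun j hj => hasDerivAt_derivMean hFδ hc hj) k hk (mem_ball_self hδ), derivMean_apply_zero]

end DerivMean

section Moments

variable {μ : Measure ℝ} [IsProbabilityMeasure μ]

theorem mom1_mem_Icc : mom1 μ ∈ Icc (0:ℝ) 1 := by
  refine ⟨setIntegral_nonneg measurableSet_Icc fun t ht => ht.1, ?_⟩
  calc mom1 μ ≤ ∫ _ in Icc (0:ℝ) 1, (1:ℝ) ∂μ :=
        setIntegral_mono_on (continuous_id.integrableOn_Icc) (integrableOn_const (by simp))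
          measurableSet_Icc fun t ht => ht.2
    _ ≤ 1 := by simp [measureReal_le_one]

theorem measureReal_Icc_eq_one (hsupp : μ (Icc (0:ℝ) 1)ᶜ = 0) : μ.real (Icc (0:ℝ) 1) = 1 := by
  simp [measureReal_def, (prob_compl_eq_zero_iff measurableSet_Icc).1 hsupp]

theorem cmom_zero (hsupp : μ (Icc (0:ℝ) 1)ᶜ = 0) : cmom μ 0 = 1 := by
  simp [cmom, measureReal_Icc_eq_one hsupp]

theorem cmom_one (hsupp : μ (Icc (0:ℝ) 1)ᶜ = 0) : cmom μ 1 = 0 := by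
  simp only [cmom, pow_one]
  rw [integral_sub continuous_id'.integrableOn_Icc (integrable_const _), setIntegral_const,
    measureReal_Icc_eq_one hsupp, one_smul]
  simp [mom1]

end Moments

section Wronskian

variable {f g : ℝ → ℝ} {x : ℝ} {n i j : ℕ}

theorem Wr_self (i : ℕ) (f g : ℝ → ℝ) : Wr i i f g = 0 :=
  funext fun _ => sub_self _

theorem hasDerivAt_Wr (hf : ContDiffAt ℝ n f x) (hg : ContDiffAt ℝ n g x) (hi : i < n)
    (hj : j < n) : HasDerivAt (Wr i j f g) (Wr (i + 1) j f g x + Wr i (j + 1) f g x) x := by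
  have := ((hf.hasDerivAt_iteratedDeriv hi).mul (hg.hasDerivAt_iteratedDeriv hj)).sub
    ((hf.hasDerivAt_iteratedDeriv hj).mul (hg.hasDerivAt_iteratedDeriv hi))
  exact this.congr_deriv (by simp only [Wr]; ring)

noncomputable def wrQuot (i j : ℕ) (f g : ℝ → ℝ) : ℝ → ℝ :=
  fun x => Wr i j f g x / Wr 1 0 f g x

theorem hasDerivAt_wrQuot (hf : ContDiffAt ℝ n f x) (hg : ContDiffAt ℝ n g x)
    (hW : Wr 1 0 f g x ≠ 0) (hi : i < n) (hj : j < n) (hn : 1 < n) :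
    HasDerivAt (wrQuot i j f g) (wrQuot (i + 1) j f g x + wrQuot i (j + 1) f g x
      - wrQuot i j f g x * wrQuot 2 0 f g x) x := by
  have := (hasDerivAt_Wr hf hg hi hj).div (hasDerivAt_Wr hf hg hn (by omega)) hW
  refine this.congr_deriv ?_
  simp only [wrQuot, Wr_self, Pi.zero_apply, add_zero]
  field_simp

theorem wrQuot_four_zero (hf : ContDiffAt ℝ 4 f x) (hg : ContDiffAt ℝ 4 g x)
    (hW : Wr 1 0 f g x ≠ 0) :
    wrQuot 4 0 f g x = iteratedDeriv 2 (Phi f g) x + 3 * deriv (Phi f g) x * Phi f g x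
      + Phi f g x ^ 3 + 2 * Phi f g x * Psi f g x + 2 * deriv (Psi f g) x := by
  have hPhi : Phi f g = wrQuot 2 0 f g := rfl
  have hPsi : Psi f g = -wrQuot 2 1 f g := rfl
  have hQ22 : wrQuot 2 2 f g x = 0 := by simp [wrQuot, Wr_self]
  have hd (i j : ℕ) (hi : i < 4) (hj : j < 4) := hasDerivAt_wrQuot hf hg hW hi hj (by norm_num)
  have hderivPhi : deriv (Phi f g) =ᶠ[𝓝 x]
      wrQuot 3 0 f g + wrQuot 2 1 f g - wrQuot 2 0 f g * wrQuot 2 0 f g := by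
    have hWev : ∀ᶠ y in 𝓝 x, Wr 1 0 f g y ≠ 0 :=
      (hasDerivAt_Wr hf hg (i := 1) (j := 0) (by norm_num) (by norm_num)).continuousAt.eventually_ne
        hW
    filter_upwards [hf.eventually (by simp), hg.eventually (by simp), hWev] with y hfy hgy hWy
    exact (hasDerivAt_wrQuot hfy hgy hWy (i := 2) (j := 0) (by norm_num) (by norm_num)
      (by norm_num)).deriv
  have hPhi2 : iteratedDeriv 2 (Phi f g) x
      = deriv (wrQuot 3 0 f g + wrQuot 2 1 f g - wrQuot 2 0 f g * wrQuot 2 0 f g) x := by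
    rw [iteratedDeriv_succ, iteratedDeriv_one, hderivPhi.deriv_eq]
  rw [hPhi2, (((hd 3 0 (by norm_num) (by norm_num)).add (hd 2 1 (by norm_num) (by norm_num))).sub
      ((hd 2 0 (by norm_num) (by norm_num)).mul (hd 2 0 (by norm_num) (by norm_num)))).deriv,
    hPsi, (hd 2 1 (by norm_num) (by norm_num)).neg.deriv, hPhi,
    (hd 2 0 (by norm_num) (by norm_num)).deriv, hQ22]
  simp only [Pi.neg_apply]
  ring

end Wronskian

section Implicit

variable {F G m p q : ℝ → ℝ} {a : ℝ}

theorem deriv_eq_zero_of_comp_mul_eventuallyEq (hF : DifferentiableAt ℝ F (m a))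
    (hG : DifferentiableAt ℝ G (m a)) (hm : DifferentiableAt ℝ m a) (hp : DifferentiableAt ℝ p a)
    (hq : DifferentiableAt ℝ q a) (hp0 : p a = F (m a)) (hq0 : q a = G (m a))
    (hp1 : deriv p a = 0) (hq1 : deriv q a = 0) (hW : Wr 1 0 F G (m a) ≠ 0)
    (heq : (F ∘ m) * q =ᶠ[𝓝 a] (G ∘ m) * p) : deriv m a = 0 := by
  have h := heq.deriv_eq
  rw [deriv_mul (hF.comp a hm) hq, deriv_mul (hG.comp a hm) hp, deriv_comp a hF hm,
    deriv_comp a hG hm, hp0, hq0, hp1, hq1] at h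
  have : Wr 1 0 F G (m a) * deriv m a = 0 := by
    simp only [Wr, iteratedDeriv_one, iteratedDeriv_zero, Function.comp_apply] at h ⊢
    linear_combination h
  exact (mul_eq_zero.1 this).resolve_left hW

theorem eq_of_wr_mul_eq {y m₂ m₄ μ₂ μ₄ : ℝ} (hW : Wr 1 0 F G y ≠ 0)
    (h₂ : Wr 1 0 F G y * m₂ = μ₂ * Wr 2 0 F G y)
    (h₄ : Wr 1 0 F G y * m₄ = μ₄ * Wr 4 0 F G y + 6 * μ₂ * m₂ * Wr 2 1 F G y
      - 3 * m₂ ^ 2 * Wr 2 0 F G y) :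
    m₄ = -3 * μ₂ ^ 2 * (Phi F G y ^ 3 + 2 * Phi F G y * Psi F G y) + μ₄ * wrQuot 4 0 F G y := by
  have hm₂ : m₂ = μ₂ * Wr 2 0 F G y / Wr 1 0 F G y := by
    rw [eq_div_iff hW]
    linear_combination h₂
  have hm₄ : m₄ = (μ₄ * Wr 4 0 F G y + 6 * μ₂ * m₂ * Wr 2 1 F G y - 3 * m₂ ^ 2 * Wr 2 0 F G y)
      / Wr 1 0 F G y := by
    rw [eq_div_iff hW]
    linear_combination h₄
  rw [hm₄, hm₂, Phi, Psi, wrQuot]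
  field_simp
  ring

theorem iteratedDeriv_four_of_comp_mul_eventuallyEq {b : ℝ} {μ : ℕ → ℝ}
    (hF : ContDiffAt ℝ 4 F b) (hG : ContDiffAt ℝ 4 G b) (hm : ContDiffAt ℝ 4 m a) (hma : m a = b)
    (hp : ContDiffAt ℝ 4 p a) (hq : ContDiffAt ℝ 4 q a)
    (hpk : ∀ k ≤ 4, iteratedDeriv k p a = μ k * iteratedDeriv k F b)
    (hqk : ∀ k ≤ 4, iteratedDeriv k q a = μ k * iteratedDeriv k G b)
    (hμ0 : μ 0 = 1) (hμ1 : μ 1 = 0) (hW : Wr 1 0 F G b ≠ 0)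
    (heq : (F ∘ m) * q =ᶠ[𝓝 a] (G ∘ m) * p) :
    iteratedDeriv 4 m a = -3 * μ 2 ^ 2 * (Phi F G b ^ 3 + 2 * Phi F G b * Psi F G b)
      + μ 4 * wrQuot 4 0 F G b := by
  subst hma
  have hm1 : deriv m a = 0 := by
    refine deriv_eq_zero_of_comp_mul_eventuallyEq (hF.differentiableAt (by norm_num))
      (hG.differentiableAt (by norm_num)) (hm.differentiableAt (by norm_num))
      (hp.differentiableAt (by norm_num)) (hq.differentiableAt (by norm_num)) ?_ ?_ ?_ ?_ hW heq
    · simpa [hμ0] using hpk 0 (by norm_num)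
    · simpa [hμ0] using hqk 0 (by norm_num)
    · simpa [hμ1] using hpk 1 (by norm_num)
    · simpa [hμ1] using hqk 1 (by norm_num)
  have hLeibniz (k : ℕ) (hk : k ≤ 4) :
      ∑ i ∈ Finset.range (k + 1), k.choose i * iteratedDeriv i (F ∘ m) a * iteratedDeriv (k - i) q a
        = ∑ i ∈ Finset.range (k + 1),
            k.choose i * iteratedDeriv i (G ∘ m) a * iteratedDeriv (k - i) p a := by
    have hk' : (k : WithTop ℕ∞) ≤ 4 := by exact_mod_cast hk
    rw [← iteratedDeriv_mul ((hF.comp a hm).of_le hk') (hq.of_le hk'),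
      ← iteratedDeriv_mul ((hG.comp a hm).of_le hk') (hp.of_le hk'), heq.iteratedDeriv_eq]
  have hcomp1 (H : ℝ → ℝ) (hH : ContDiffAt ℝ 4 H (m a)) : iteratedDeriv 1 (H ∘ m) a = 0 := by
    rw [iteratedDeriv_one, deriv_comp a (hH.differentiableAt (by norm_num))
      (hm.differentiableAt (by norm_num)), hm1, mul_zero]
  have hcomp2 (H : ℝ → ℝ) (hH : ContDiffAt ℝ 4 H (m a)) :=
    iteratedDeriv_comp_two_of_deriv_eq_zero (hH.of_le (by norm_num)) (hm.of_le (by norm_num)) hm1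
  have hcomp4 (H : ℝ → ℝ) (hH : ContDiffAt ℝ 4 H (m a)) :=
    iteratedDeriv_comp_four_of_deriv_eq_zero hH hm hm1
  have E2 := hLeibniz 2 (by norm_num)
  have E4 := hLeibniz 4 (by norm_num)
  simp only [Nat.reduceAdd, Finset.sum_range_succ, Finset.range_one, Finset.sum_singleton,
    Nat.choose_zero_right, Nat.cast_one, iteratedDeriv_zero, Function.comp_apply, one_mul,
    tsub_zero, Nat.reduceLeDiff, hqk, Nat.choose_succ_self_right, Nat.cast_ofNat, hcomp1 F hF,
    mul_zero, Nat.add_one_sub_one, Nat.one_le_ofNat, hμ1, iteratedDeriv_one, zero_mul, add_zero,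
    Nat.choose_self, hcomp2 F hF, tsub_self, zero_le, hμ0, hpk, hcomp1 G hG, hcomp2 G hG,
    tsub_le_iff_right, le_add_iff_nonneg_right, Nat.choose_one_right,
    show Nat.choose 4 2 = 6 by decide, Nat.reduceSub, hcomp4 F hF, hcomp4 G hG] at E2 E4
  refine eq_of_wr_mul_eq hW (m₂ := iteratedDeriv 2 m a) ?_ ?_
  · simp only [Wr, iteratedDeriv_one, iteratedDeriv_zero]
    linear_combination E2
  · simp only [Wr, iteratedDeriv_one, iteratedDeriv_zero]
    linear_combination E4

end Implicit

section ClassC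

variable {n : ℕ} {I : Set ℝ} {f g : ℝ → ℝ} {x : ℝ}

theorem ClassC.pos (hfg : ClassC n I f g) (hx : x ∈ I) : 0 < g x :=
  hfg.2.2.1 x hx

theorem ClassC.wr_ne_zero (hfg : ClassC n I f g) (hx : x ∈ I) : Wr 1 0 f g x ≠ 0 :=
  hfg.2.2.2 x hx

theorem ClassC.contDiffAt_left (hfg : ClassC n I f g) (hI : IsOpen I) (hx : x ∈ I) :
    ContDiffAt ℝ n f x :=
  hfg.1.contDiffAt (hI.mem_nhds hx)

theorem ClassC.contDiffAt_right (hfg : ClassC n I f g) (hI : IsOpen I) (hx : x ∈ I) :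
    ContDiffAt ℝ n g x :=
  hfg.2.1.contDiffAt (hI.mem_nhds hx)

theorem ClassC.contDiffAt_div (hfg : ClassC n I f g) (hI : IsOpen I) (hx : x ∈ I) :
    ContDiffAt ℝ n (fun y => f y / g y) x :=
  (hfg.contDiffAt_left hI hx).div (hfg.contDiffAt_right hI hx) (hfg.pos hx).ne'

theorem ClassC.hasDerivAt_div (hfg : ClassC n I f g) (hn : n ≠ 0) (hI : IsOpen I) (hx : x ∈ I) :
    HasDerivAt (fun y => f y / g y) (Wr 1 0 f g x / g x ^ 2) x := by
  have hd (φ : ℝ → ℝ) (hφ : ContDiffAt ℝ n φ x) : HasDerivAt φ (deriv φ x) x :=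
    (hφ.differentiableAt (by exact_mod_cast hn)).hasDerivAt
  refine ((hd f (hfg.contDiffAt_left hI hx)).div (hd g (hfg.contDiffAt_right hI hx))
    (hfg.pos hx).ne').congr_deriv ?_
  simp only [Wr, iteratedDeriv_one, iteratedDeriv_zero]

theorem ClassC.deriv_div_ne_zero (hfg : ClassC n I f g) (hn : n ≠ 0) (hI : IsOpen I) (hx : x ∈ I) :
    deriv (fun y => f y / g y) x ≠ 0 := by
  rw [(hfg.hasDerivAt_div hn hI hx).deriv]
  exact div_ne_zero (hfg.wr_ne_zero hx) (pow_ne_zero 2 (hfg.pos hx).ne')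

theorem ClassC.injOn_div (hfg : ClassC n I f g) (hn : n ≠ 0) (hI : IsOpen I)
    (hIc : I.OrdConnected) : InjOn (fun y => f y / g y) I :=
  injOn_of_hasDerivAt_ne_zero hI hIc (fun _ hy => hfg.hasDerivAt_div hn hI hy) fun _ hy =>
    div_ne_zero (hfg.wr_ne_zero hy) (pow_ne_zero 2 (hfg.pos hy).ne')

end ClassC

section Mean

variable {n : ℕ} {I : Set ℝ} {f g : ℝ → ℝ} {μ : Measure ℝ} {x : ℝ}

theorem mfun_eq_invFunOn_comp (I : Set ℝ) (f g : ℝ → ℝ) (μ : Measure ℝ) (x : ℝ) :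
    mfun I f g μ x = Function.invFunOn (fun y => f y / g y) I ∘
      fun u => derivMean μ (mom1 μ) f x 0 u / derivMean μ (mom1 μ) g x 0 u := by
  have hseg (t u : ℝ) : t * (x + (1 - mom1 μ) * u) + (1 - t) * (x - mom1 μ * u)
      = x + (t - mom1 μ) * u := by ring
  funext u
  simp only [mfun, Mmean, derivMean, Function.comp_apply, pow_zero, one_mul, iteratedDeriv_zero,
    hseg]

variable [IsProbabilityMeasure μ]

theorem derivMean_mom1_zero (hsupp : μ (Icc (0:ℝ) 1)ᶜ = 0) (F : ℝ → ℝ) :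
    derivMean μ (mom1 μ) F x 0 0 = F x := by
  rw [derivMean_apply_zero, ← cmom, cmom_zero hsupp, one_mul, iteratedDeriv_zero]

theorem contDiffAt_derivMean_div (hfg : ClassC n I f g) (hI : IsOpen I) (hx : x ∈ I)
    (hsupp : μ (Icc (0:ℝ) 1)ᶜ = 0) :
    ContDiffAt ℝ n (fun u => derivMean μ (mom1 μ) f x 0 u / derivMean μ (mom1 μ) g x 0 u) 0 :=
  (contDiffAt_derivMean (hfg.contDiffAt_left hI hx) mom1_mem_Icc).div
    (contDiffAt_derivMean (hfg.contDiffAt_right hI hx) mom1_mem_Icc)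
    (by rw [derivMean_mom1_zero hsupp]; exact (hfg.pos hx).ne')

theorem mfun_apply_zero (hfg : ClassC n I f g) (hn : n ≠ 0) (hI : IsOpen I)
    (hIc : I.OrdConnected) (hx : x ∈ I) (hsupp : μ (Icc (0:ℝ) 1)ᶜ = 0) :
    mfun I f g μ x 0 = x := by
  rw [mfun_eq_invFunOn_comp, Function.comp_apply, derivMean_mom1_zero hsupp,
    derivMean_mom1_zero hsupp]
  exact (hfg.injOn_div hn hI hIc).leftInvOn_invFunOn hx

theorem contDiffAt_mfun (hfg : ClassC n I f g) (hn : n ≠ 0) (hI : IsOpen I)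
    (hIc : I.OrdConnected) (hx : x ∈ I) (hsupp : μ (Icc (0:ℝ) 1)ᶜ = 0) :
    ContDiffAt ℝ n (mfun I f g μ x) 0 := by
  rw [mfun_eq_invFunOn_comp]
  refine ContDiffAt.comp 0 ?_ (contDiffAt_derivMean_div hfg hI hx hsupp)
  rw [derivMean_mom1_zero hsupp, derivMean_mom1_zero hsupp]
  exact contDiffAt_invFunOn (hI.mem_nhds hx) (hfg.injOn_div hn hI hIc)
    (hfg.contDiffAt_div hI hx) (hfg.deriv_div_ne_zero hn hI hx) (by exact_mod_cast hn)

theorem comp_mfun_mul_eventuallyEq (hfg : ClassC n I f g) (hn : n ≠ 0) (hI : IsOpen I)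
    (hIc : I.OrdConnected) (hx : x ∈ I) (hsupp : μ (Icc (0:ℝ) 1)ᶜ = 0) :
    (f ∘ mfun I f g μ x) * derivMean μ (mom1 μ) g x 0
      =ᶠ[𝓝 0] (g ∘ mfun I f g μ x) * derivMean μ (mom1 μ) f x 0 := by
  have hm : ∀ᶠ u in 𝓝 0, mfun I f g μ x u ∈ I := by
    refine (contDiffAt_mfun hfg hn hI hIc hx hsupp).continuousAt.preimage_mem_nhds ?_
    rw [mfun_apply_zero hfg hn hI hIc hx hsupp]
    exact hI.mem_nhds hx
  have hR : Tendsto (fun u => derivMean μ (mom1 μ) f x 0 u / derivMean μ (mom1 μ) g x 0 u)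
      (𝓝 0) (𝓝 (f x / g x)) := by
    simpa only [derivMean_mom1_zero hsupp] using
      (contDiffAt_derivMean_div hfg hI hx hsupp).continuousAt.tendsto
  have hQ : ∀ᶠ u in 𝓝 0, derivMean μ (mom1 μ) g x 0 u ≠ 0 :=
    (contDiffAt_derivMean (hfg.contDiffAt_right hI hx) mom1_mem_Icc).continuousAt.eventually_ne
      (by rw [derivMean_mom1_zero hsupp]; exact (hfg.pos hx).ne')
  filter_upwards [hR.eventually (eventually_apply_invFunOn (h := fun y => f y / g y)
    (hI.mem_nhds hx) ((hfg.contDiffAt_div hI hx).hasStrictDerivAt (by exact_mod_cast hn))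
    (hfg.deriv_div_ne_zero hn hI hx)), hm, hQ] with u hu hmu hQu
  rw [mfun_eq_invFunOn_comp] at hmu ⊢
  simp only [Pi.mul_apply, Function.comp_apply] at hmu ⊢
  linear_combination (div_eq_div_iff (hfg.pos hmu).ne' hQu).1 hu

end Mean

theorem statement13_general (I : Set ℝ) (hIopen : IsOpen I)
    (hIconn : I.OrdConnected)
    (f g : ℝ → ℝ) (hfg : ClassC 4 I f g)
    (μ : Measure ℝ) [IsProbabilityMeasure μ] (hsupp : μ (Set.Icc (0:ℝ) 1)ᶜ = 0) :
    ∀ x ∈ I,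
      ContDiffAt ℝ 4 (mfun I f g μ x) 0 ∧
      iteratedDeriv 4 (mfun I f g μ x) 0
        = -3 * cmom μ 2 ^ 2 * (Phi f g x ^ 3 + 2 * Phi f g x * Psi f g x)
          + cmom μ 4 * (iteratedDeriv 2 (Phi f g) x
            + 3 * deriv (Phi f g) x * Phi f g x + Phi f g x ^ 3
            + 2 * Phi f g x * Psi f g x + 2 * deriv (Psi f g) x) := by
  intro x hx
  have hf := hfg.contDiffAt_left hIopen hx
  have hg := hfg.contDiffAt_right hIopen hx
  have hm := contDiffAt_mfun hfg four_ne_zero hIopen hIconn hx hsupp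
  have hm0 := mfun_apply_zero hfg four_ne_zero hIopen hIconn hx hsupp
  refine ⟨hm, ?_⟩
  rw [iteratedDeriv_four_of_comp_mul_eventuallyEq (μ := cmom μ) hf hg hm hm0
    (contDiffAt_derivMean hf mom1_mem_Icc) (contDiffAt_derivMean hg mom1_mem_Icc)
    (fun k hk => iteratedDeriv_derivMean hf mom1_mem_Icc hk)
    (fun k hk => iteratedDeriv_derivMean hg mom1_mem_Icc hk)
    (cmom_zero hsupp) (cmom_one hsupp) (hfg.wr_ne_zero hx)
    (comp_mfun_mul_eventuallyEq hfg four_ne_zero hIopen hIconn hx hsupp),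
    wrQuot_four_zero hf hg (hfg.wr_ne_zero hx)]

/-- The fourth derivative of `m_x` at the origin. -/
theorem statement13 (I : Set ℝ) (hIopen : IsOpen I) (hIne : I.Nonempty)
    (hIconn : I.OrdConnected)
    (f g : ℝ → ℝ) (hfg : ClassC 4 I f g)
    (μ : Measure ℝ) [IsProbabilityMeasure μ] (hsupp : μ (Set.Icc (0:ℝ) 1)ᶜ = 0) :
    ∀ x ∈ I,
      ContDiffAt ℝ 4 (mfun I f g μ x) 0 ∧
      iteratedDeriv 4 (mfun I f g μ x) 0
        = -3 * cmom μ 2 ^ 2 * (Phi f g x ^ 3 + 2 * Phi f g x * Psi f g x)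
          + cmom μ 4 * (iteratedDeriv 2 (Phi f g) x
            + 3 * deriv (Phi f g) x * Phi f g x + Phi f g x ^ 3
            + 2 * Phi f g x * Psi f g x + 2 * deriv (Psi f g) x) :=
  statement13_general I hIopen hIconn f g hfg μ hsupp
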